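/- arXiv:1303.2203 — 7 statements merged into one kernel-verified Lean document; each statement's English description precedes it below -/
import Mathlib

section
/- Let X be a real normed space, let φ : X → ℝ be a linear functional, and let F : X → Set ℝ be a multifunction such that: F(x) is nonempty for every x ∈ X; F is upper semicontinuous at 0; F(0) = {0}; and F(x) ⊆ {y ∈ ℝ | y ≤ φ(x)} (equivalently, {φ(x)} − F(x) ⊆ ℝ₊) for every x ∈ X. Then φ is continuous. -/
/-- if a nonempty-valued multifunction `F`, upper semicontinuous at `0`
with `F 0 = {0}`, satisfies `F x ⊆ {y | y ≤ φ x}` for all `x`, then the linear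
functional `φ` is continuous. -/
theorem linearMap_continuous_of_dominating_usc_multifunction
    {X : Type*} [NormedAddCommGroup X] [NormedSpace ℝ X]
    (φ : X →ₗ[ℝ] ℝ) (F : X → Set ℝ)
    (hne : ∀ x : X, (F x).Nonempty)
    (husc : ∀ V : Set ℝ, IsOpen V → F 0 ⊆ V →
      ∃ U ∈ nhds (0 : X), ∀ x ∈ U, F x ⊆ V)
    (hF0 : F 0 = {0})
    (hdom : ∀ x : X, F x ⊆ {y : ℝ | y ≤ φ x}) :
    Continuous φ := by
  obtain ⟨U, hU, hFU⟩ := husc (Set.Ioo (-1) 1) isOpen_Ioo (by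
    rw [hF0]; intro y hy; simp at hy; subst hy; constructor <;> norm_num)
  -- φ x > -1 for x ∈ U
  have key : ∀ x ∈ U, -1 < φ x := by
    intro x hx
    obtain ⟨y, hy⟩ := hne x
    exact lt_of_lt_of_le (hFU x hx hy).1 (hdom x hy)
  obtain ⟨ε, hε, hball⟩ := Metric.mem_nhds_iff.mp hU
  apply AddMonoidHomClass.continuous_of_bound φ (2 / ε)
  intro x
  rcases eq_or_ne x 0 with rfl | hx
  · simp
  · have hxn : 0 < ‖x‖ := norm_pos_iff.mpr hx
    set c : ℝ := ε / (2 * ‖x‖) with hc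
    have hcpos : 0 < c := by positivity
    have hz : ‖c • x‖ < ε := by
      rw [norm_smul, Real.norm_of_nonneg hcpos.le, hc, div_mul_eq_mul_div,
        div_lt_iff₀ (by positivity)]
      nlinarith
    have h1 : -1 < φ (c • x) := key _ (hball (by simpa [Metric.mem_ball] using hz))
    have h2 : -1 < φ (-(c • x)) := key _ (hball (by simpa [Metric.mem_ball] using hz))
    rw [map_neg] at h2
    rw [map_smul, smul_eq_mul] at h1 h2
    have hcc : c * (1 / c) = 1 := by field_simp
    have habs : |φ x| ≤ 1 / c := by
      rw [abs_le]
      constructor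
      · nlinarith
      · nlinarith
    calc |φ x| ≤ 1 / c := habs
      _ = 2 / ε * ‖x‖ := by
          rw [hc, one_div_div]; ring
end

section
/- Let X be a real normed space and let φ : X → ℝ be a linear functional that is not continuous. Then there is no multifunction F : X → Set ℝ such that: F(x) is nonempty for every x ∈ X; F is upper semicontinuous at 0; F(0) = {0}; and {φ(x)} − F(x) ⊆ ℝ₊ (equivalently, F(x) ⊆ {y ∈ ℝ | y ≤ φ(x)}) for every x ∈ X. -/
open Pointwise

/-- if `φ` is a discontinuous linear functional, then there is no
nonempty-valued multifunction `F`, upper semicontinuous at `0`, with `F 0 = {0}`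
and `{φ x} - F x ⊆ ℝ₊` for all `x`. -/
theorem no_usc_multifunction_dominated_by_discontinuous_linear
    {X : Type*} [NormedAddCommGroup X] [NormedSpace ℝ X]
    (φ : X →ₗ[ℝ] ℝ) (hφ : ¬ Continuous φ) :
    ¬ ∃ F : X → Set ℝ,
        (∀ x : X, (F x).Nonempty) ∧
        (∀ V : Set ℝ, IsOpen V → F 0 ⊆ V →
          ∃ U ∈ nhds (0 : X), ∀ x ∈ U, F x ⊆ V) ∧
        F 0 = {0} ∧
        (∀ x : X, ({φ x} : Set ℝ) - F x ⊆ Set.Ici (0 : ℝ)) := by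
  rintro ⟨F, hne, husc, h0, hdom⟩
  -- From domination: every y ∈ F x satisfies y ≤ φ x
  have hle : ∀ x : X, ∀ y ∈ F x, y ≤ φ x := by
    intro x y hy
    have : φ x - y ∈ Set.Ici (0 : ℝ) := hdom x (Set.sub_mem_sub rfl hy)
    linarith [Set.mem_Ici.mp this]
  -- USC at 0 with V = Ioo (-1) 1
  obtain ⟨U, hU, hFU⟩ := husc (Set.Ioo (-1) 1) isOpen_Ioo (by
    rw [h0]; intro y hy; simp only [Set.mem_singleton_iff] at hy; subst hy
    constructor <;> norm_num)
  obtain ⟨r, hr, hball⟩ := Metric.mem_nhds_iff.mp hU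
  -- φ x > -1 on the ball
  have hgt : ∀ x : X, ‖x‖ < r → -1 < φ x := by
    intro x hx
    obtain ⟨y, hy⟩ := hne x
    have h1 : y ∈ Set.Ioo (-1 : ℝ) 1 :=
      hFU x (hball (by simpa [Metric.mem_ball, dist_zero_right] using hx)) hy
    have := hle x y hy
    linarith [h1.1]
  -- hence |φ x| ≤ 1 on the ball
  have habs : ∀ x : X, ‖x‖ < r → |φ x| ≤ 1 := by
    intro x hx
    have h1 := hgt x hx
    have h2 := hgt (-x) (by simpa using hx)
    rw [map_neg] at h2
    rw [abs_le]; constructor <;> linarith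
  -- bound: ‖φ x‖ ≤ (2/r) * ‖x‖
  apply hφ
  apply AddMonoidHomClass.continuous_of_bound φ (2 / r)
  intro x
  rcases eq_or_ne x 0 with rfl | hx0
  · simp
  · have hxn : (0 : ℝ) < ‖x‖ := norm_pos_iff.mpr hx0
    set t : ℝ := r / (2 * ‖x‖) with ht
    have htpos : 0 < t := by positivity
    have hnt : ‖t • x‖ < r := by
      rw [norm_smul, Real.norm_eq_abs, abs_of_pos htpos, ht]
      rw [div_mul_eq_mul_div, mul_comm]
      rw [div_lt_iff₀ (by positivity)]
      nlinarith
    have := habs (t • x) hnt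
    rw [map_smul, smul_eq_mul, abs_mul, abs_of_pos htpos] at this
    rw [ht, div_mul_eq_mul_div, div_le_one (by positivity)] at this
    rw [Real.norm_eq_abs, div_mul_eq_mul_div, le_div_iff₀ hr]
    linarith
end

section
/- Let X be a real normed space, let φ : X → ℝ be a linear functional, and let G : X → Set ℝ be a multifunction such that: G(x) is nonempty for every x ∈ X; G is upper semicontinuous at 0; G(0) = {0}; and G(x) ⊆ {y ∈ ℝ | φ(x) ≤ y} (equivalently, G(x) − {φ(x)} ⊆ ℝ₊) for every x ∈ X. Then φ is continuous. -/
/-- if a nonempty-valued multifunction `G`, upper semicontinuous at `0`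
with `G 0 = {0}`, satisfies `G x ⊆ {y | φ x ≤ y}` for all `x`, then the linear
functional `φ` is continuous. -/
theorem linearMap_continuous_of_dominated_usc_multifunction
    {X : Type*} [NormedAddCommGroup X] [NormedSpace ℝ X]
    (φ : X →ₗ[ℝ] ℝ) (G : X → Set ℝ)
    (hne : ∀ x : X, (G x).Nonempty)
    (husc : ∀ V : Set ℝ, IsOpen V → G 0 ⊆ V →
      ∃ U ∈ nhds (0 : X), ∀ x ∈ U, G x ⊆ V)
    (hG0 : G 0 = {0})
    (hdom : ∀ x : X, G x ⊆ {y : ℝ | φ x ≤ y}) :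
    Continuous φ := by
  obtain ⟨U, hU, hUV⟩ := husc (Set.Ioo (-1) 1) isOpen_Ioo (by
    rw [hG0]; intro y hy; rw [Set.mem_singleton_iff] at hy; subst hy; constructor <;> norm_num)
  obtain ⟨δ, hδ, hball⟩ := Metric.mem_nhds_iff.mp hU
  -- φ x ≤ 1 for all x with ‖x‖ < δ
  have key : ∀ x : X, ‖x‖ < δ → φ x ≤ 1 := by
    intro x hx
    obtain ⟨y, hy⟩ := hne x
    have hxU : x ∈ U := hball (by simpa [Metric.mem_ball, dist_eq_norm] using hx)
    have : y ∈ Set.Ioo (-1 : ℝ) 1 := hUV x hxU hy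
    exact le_of_lt (lt_of_le_of_lt (hdom x hy) this.2)
  have abs_key : ∀ x : X, ‖x‖ < δ → |φ x| ≤ 1 := by
    intro x hx
    have h1 := key x hx
    have h2 := key (-x) (by simpa using hx)
    rw [map_neg] at h2
    rw [abs_le]; constructor <;> linarith
  apply AddMonoidHomClass.continuous_of_bound φ (2 / δ)
  intro x
  rcases eq_or_ne x 0 with rfl | hx0
  · simp
  · have hn : (0:ℝ) < ‖x‖ := norm_pos_iff.mpr hx0
    have hs : ‖(δ / (2 * ‖x‖)) • x‖ < δ := by
      rw [norm_smul, Real.norm_eq_abs, abs_of_pos (by positivity)]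
      rw [div_mul_eq_mul_div, mul_comm]
      rw [div_lt_iff₀ (by positivity)]
      nlinarith
    have := abs_key _ hs
    rw [map_smul, smul_eq_mul, abs_mul, abs_of_pos (show (0:ℝ) < δ / (2 * ‖x‖) by positivity)] at this
    rw [div_mul_eq_mul_div, div_le_one (by positivity)] at this
    rw [Real.norm_eq_abs, div_mul_eq_mul_div, le_div_iff₀ hδ]
    nlinarith [abs_nonneg (φ x)]
  done
end

section
/- Let X be a real normed space and let φ : X → ℝ be a linear functional that is not continuous. Then there is no multifunction G : X → Set ℝ such that: G(x) is nonempty for every x ∈ X; G is upper semicontinuous at 0; G(0) = {0}; and G(x) − {φ(x)} ⊆ ℝ₊ (equivalently, G(x) ⊆ {y ∈ ℝ | φ(x) ≤ y}) for every x ∈ X. -/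
open Pointwise

/-- if `φ` is a discontinuous linear functional, then there is no
nonempty-valued multifunction `G`, upper semicontinuous at `0`, with `G 0 = {0}`
and `G x - {φ x} ⊆ ℝ₊` for all `x`. -/
theorem no_usc_multifunction_dominating_discontinuous_linear
    {X : Type*} [NormedAddCommGroup X] [NormedSpace ℝ X]
    (φ : X →ₗ[ℝ] ℝ) (hφ : ¬ Continuous φ) :
    ¬ ∃ G : X → Set ℝ,
        (∀ x : X, (G x).Nonempty) ∧
        (∀ V : Set ℝ, IsOpen V → G 0 ⊆ V →
          ∃ U ∈ nhds (0 : X), ∀ x ∈ U, G x ⊆ V) ∧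
        G 0 = {0} ∧
        (∀ x : X, G x - ({φ x} : Set ℝ) ⊆ Set.Ici (0 : ℝ)) := by
  rintro ⟨G, hne, husc, h0, hdom⟩
  -- key: φ x ≤ y for every y ∈ G x
  have hle : ∀ x : X, ∀ y ∈ G x, φ x ≤ y := by
    intro x y hy
    have : y - φ x ∈ G x - ({φ x} : Set ℝ) :=
      Set.sub_mem_sub hy rfl
    have := hdom x this
    simpa [Set.mem_Ici, sub_nonneg] using this
  -- USC with V = Ioo (-1) 1
  have hGV : G 0 ⊆ Set.Ioo (-1 : ℝ) 1 := by
    rw [h0]; intro y hy; simp at hy; subst hy; constructor <;> norm_num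
  obtain ⟨U, hU, hUV⟩ := husc (Set.Ioo (-1) 1) isOpen_Ioo hGV
  -- φ x < 1 on U
  have hφlt : ∀ x ∈ U, φ x < 1 := by
    intro x hx
    obtain ⟨y, hy⟩ := hne x
    exact lt_of_le_of_lt (hle x y hy) (hUV x hx hy).2
  obtain ⟨ε, hε, hball⟩ := Metric.mem_nhds_iff.mp hU
  -- bound: |φ x| ≤ (2/ε) ‖x‖
  have hbound : ∀ x : X, ‖φ x‖ ≤ (2 / ε) * ‖x‖ := by
    intro x
    rcases eq_or_ne x 0 with rfl | hx0
    · simp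
    · have hnx : (0:ℝ) < ‖x‖ := norm_pos_iff.mpr hx0
      set z := (ε / (2 * ‖x‖)) • x with hz
      have hc : (0:ℝ) < ε / (2 * ‖x‖) := by positivity
      have hzball : z ∈ Metric.ball (0 : X) ε := by
        rw [Metric.mem_ball, dist_zero_right, hz, norm_smul,
          Real.norm_of_nonneg hc.le]
        rw [div_mul_eq_mul_div, div_lt_iff₀ (by positivity)]
        nlinarith
      have h1 : φ z < 1 := hφlt z (hball hzball)
      have h2 : φ (-z) < 1 := hφlt (-z) (hball (by
        simpa [Metric.mem_ball, dist_zero_right] using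
          (by simpa [Metric.mem_ball, dist_zero_right] using hzball : ‖z‖ < ε)))
      have h2' : -1 < φ z := by
        have := h2
        rw [map_neg] at this
        linarith
      have habs : |φ z| ≤ 1 := by
        rw [abs_le]; constructor <;> linarith
      have hφz : φ z = (ε / (2 * ‖x‖)) * φ x := by
        rw [hz, map_smul]; rfl
      rw [hφz] at habs
      rw [abs_mul, abs_of_pos hc] at habs
      rw [Real.norm_eq_abs, div_mul_eq_mul_div, le_div_iff₀ hε]
      rw [div_mul_eq_mul_div, div_le_one (by positivity)] at habs
      nlinarith [abs_nonneg (φ x)]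
  exact hφ (φ.mkContinuous (2 / ε) hbound).continuous
end

section
/- Let X be a real normed space and let φ : X → ℝ be a linear functional that is not continuous. Then there is no continuous linear functional T : X → ℝ such that T(x) ≤ φ(x) for every x ∈ X. -/
/-- no continuous linear functional is dominated pointwise by a
discontinuous linear functional. -/
theorem no_continuous_linear_below_discontinuous_linear
    {X : Type*} [NormedAddCommGroup X] [NormedSpace ℝ X]
    (φ : X →ₗ[ℝ] ℝ) (hφ : ¬ Continuous φ) :
    ¬ ∃ T : X →L[ℝ] ℝ, ∀ x : X, T x ≤ φ x := by
  rintro ⟨T, hT⟩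
  have heq : ∀ x, T x = φ x := by
    intro x
    have h1 := hT x
    have h2 := hT (-x)
    simp only [map_neg] at h2
    linarith
  have : Continuous φ := by
    have : (φ : X → ℝ) = T := by ext x; exact (heq x).symm
    rw [this]; exact T.continuous
  exact hφ this
end

section
/- Let X be a real normed space and let φ : X → ℝ be a linear functional that is not continuous. Define the multifunction F : X → Set ℝ by F(x) = {φ(x)}. Then the Y-weak subdifferential of F at (0,0), namely the set {T : X → ℝ | T is linear and continuous, and for every x ∈ X, φ(x) − T(x) ∉ (−∞, 0)}, is empty — even though F is ℝ₊-convex, 0 lies in the interior of the domain of F, 0 ∈ F(0), and F(0) ∩ (0 − int ℝ₊) = ∅. -/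
/-- for `F x = {φ x}` with `φ` a discontinuous linear functional,
the Y-weak subdifferential of `F` at `(0,0)` is empty, even though `F` is
`ℝ₊`-convex, `0` lies in the interior of the domain of `F`, `0 ∈ F 0`, and
`F 0 ∩ (0 - int ℝ₊) = ∅`. -/
theorem weak_subdifferential_empty_of_discontinuous_linear
    {X : Type*} [NormedAddCommGroup X] [NormedSpace ℝ X]
    (φ : X →ₗ[ℝ] ℝ) (hφ : ¬ Continuous φ)
    (F : X → Set ℝ) (hF : ∀ x : X, F x = {φ x}) :
    {T : X →L[ℝ] ℝ | ∀ x : X, φ x - T x ∉ Set.Iio (0 : ℝ)} = ∅ ∧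
    Convex ℝ {p : X × ℝ | ∃ y ∈ F p.1, ∃ k ∈ Set.Ici (0 : ℝ), p.2 = y + k} ∧
    (0 : X) ∈ interior {x : X | (F x).Nonempty} ∧
    (0 : ℝ) ∈ F 0 ∧
    F 0 ∩ Set.Iio (0 : ℝ) = ∅ := by
  refine ⟨?_, ?_, ?_, ?_, ?_⟩
  · ext T
    simp only [Set.mem_setOf_eq, Set.mem_empty_iff_false, iff_false, not_forall]
    by_contra h
    push_neg at h
    have heq : ∀ x : X, φ x = T x := by
      intro x
      have h1 := h x
      have h2 := h (-x)
      simp only [Set.mem_Iio, not_lt] at h1 h2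
      simp only [map_neg] at h2
      linarith
    exact hφ (by
      have : (φ : X → ℝ) = T := funext heq
      rw [this]; exact T.continuous)
  · intro p hp q hq a b ha hb hab
    simp only [hF, Set.mem_setOf_eq, Set.mem_singleton_iff, Set.mem_Ici] at hp hq ⊢
    obtain ⟨y, hy, k, hk, hpk⟩ := hp
    obtain ⟨z, hz, l, hl, hql⟩ := hq
    refine ⟨φ (a • p.1 + b • q.1), rfl, a * k + b * l, by positivity, ?_⟩
    simp only [map_add, map_smul, smul_eq_mul]
    subst hy hz
    simp [hpk, hql]
    ring
  · have : {x : X | (F x).Nonempty} = Set.univ := by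
      ext x; simp [hF]
    rw [this, interior_univ]; trivial
  · simp [hF]
  · ext y; simp only [hF, Set.mem_inter_iff, Set.mem_singleton_iff, Set.mem_Iio,
      Set.mem_empty_iff_false, iff_false, not_and, map_zero]
    rintro rfl; simp
end

section
/- Let X be a real normed space and let φ : X → ℝ be a linear functional that is not continuous. Define the multifunction F : X → Set ℝ by F(x) = {φ(x)}. Then the subdifferential of F at (0,0), namely the set {T : X → ℝ | T is linear and continuous, and for every x ∈ X, φ(x) − T(x) ∈ ℝ₊}, is empty — even though F is ℝ₊-convex, 0 lies in the interior of the domain of F, 0 ∈ F(0), and F(0) − 0 ⊆ ℝ₊. -/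
/-- for `F x = {φ x}` with `φ` a discontinuous linear functional,
the subdifferential of `F` at `(0,0)` is empty, even though `F` is `ℝ₊`-convex,
`0` lies in the interior of the domain of `F`, `0 ∈ F 0`, and `F 0 - 0 ⊆ ℝ₊`. -/
theorem subdifferential_empty_of_discontinuous_linear
    {X : Type*} [NormedAddCommGroup X] [NormedSpace ℝ X]
    (φ : X →ₗ[ℝ] ℝ) (hφ : ¬ Continuous φ)
    (F : X → Set ℝ) (hF : ∀ x : X, F x = {φ x}) :
    {T : X →L[ℝ] ℝ | ∀ x : X, φ x - T x ∈ Set.Ici (0 : ℝ)} = ∅ ∧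
    Convex ℝ {p : X × ℝ | ∃ y ∈ F p.1, ∃ k ∈ Set.Ici (0 : ℝ), p.2 = y + k} ∧
    (0 : X) ∈ interior {x : X | (F x).Nonempty} ∧
    (0 : ℝ) ∈ F 0 ∧
    (∀ y ∈ F 0, y - 0 ∈ Set.Ici (0 : ℝ)) := by
  refine ⟨?_, ?_, ?_, ?_, ?_⟩
  · ext T
    simp only [Set.mem_setOf_eq, Set.mem_empty_iff_false, iff_false]
    intro h
    apply hφ
    have : (φ : X → ℝ) = T := by
      funext x
      have h1 := h x
      have h2 := h (-x)
      simp only [map_neg, Set.mem_Ici] at h1 h2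
      linarith
    rw [this]
    exact T.continuous
  · have hset : {p : X × ℝ | ∃ y ∈ F p.1, ∃ k ∈ Set.Ici (0 : ℝ), p.2 = y + k}
        = {p : X × ℝ | φ p.1 ≤ p.2} := by
      ext ⟨x, r⟩
      simp only [hF, Set.mem_setOf_eq, Set.mem_singleton_iff, Set.mem_Ici]
      constructor
      · rintro ⟨y, rfl, k, hk, rfl⟩; linarith
      · intro h; exact ⟨φ x, rfl, r - φ x, by linarith, by ring⟩
    rw [hset]
    intro p hp q hq a b ha hb hab
    simp only [Set.mem_setOf_eq] at *
    simp only [Prod.smul_fst, Prod.smul_snd, Prod.fst_add, Prod.snd_add, map_add,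
      map_smul, smul_eq_mul]
    nlinarith [mul_le_mul_of_nonneg_left hp ha, mul_le_mul_of_nonneg_left hq hb]
  · have : {x : X | (F x).Nonempty} = Set.univ := by
      ext x; simp [hF]
    rw [this, interior_univ]; trivial
  · simp [hF]
  · intro y hy
    simp only [hF, Set.mem_singleton_iff, map_zero] at hy
    simp [hy]
end
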